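/- Let A ∈ ℝ^{n×n}, b ∈ ℝ^n with b ≠ 0, λ ∈ ℝ, and let K_j = span{b, A b, ..., A^{j-1} b} denote the Krylov subspace of order j (initial guess x_0 = 0, so r_0 = b). Suppose L_{k+1} ∈ ℝ^{n×(k+1)} has full column rank with column space equal to K_{k+1}, its first k columns L_k ∈ ℝ^{n×k} have full column rank with column space equal to K_k, and define the block-diagonal matrix L̄_{k+1} = diag(L_{k+1}, L_k) ∈ ℝ^{2n×(2k+1)}, which has full column rank. Define the hybrid residual hr(x) = [b; 0] − [A; λI] x ∈ ℝ^{2n} (the stacked vector with top block b − A x and bottom block −λ x). Let x_k^G ∈ K_k satisfy ‖hr(x_k^G)‖ ≤ ‖hr(x)‖ for all x ∈ K_k (the hybrid GMRES iterate), and let x_k^C ∈ K_k satisfy ‖L̄_{k+1}† hr(x_k^C)‖ ≤ ‖L̄_{k+1}† hr(x)‖ for all x ∈ K_k (the hybrid CMRH iterate). Set hr_k^G = hr(x_k^G) and hr_k^C = hr(x_k^C). Then ‖hr_k^G‖ ≤ ‖hr_k^C‖ ≤ κ(L̄_{k+1}) ‖hr_k^G‖, where κ(L̄_{k+1}) = ‖L̄_{k+1}‖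 ‖L̄_{k+1}†‖ with ‖·‖ the spectral norm on matrices and the Euclidean norm on vectors. -/

import Mathlib

open Matrix

/-- The Euclidean norm of a real vector. -/
noncomputable def euclNorm {ι : Type*} [Fintype ι] (v : ι → ℝ) : ℝ :=
  Real.sqrt (∑ i, (v i) ^ 2)

/-- The spectral norm (operator 2-norm) of a real matrix. -/
noncomputable def spec {α β : Type*} [Fintype α] [Fintype β] [DecidableEq β]
    (M : Matrix α β ℝ) : ℝ :=
  ‖LinearMap.toContinuousLinearMap (Matrix.toEuclideanLin M)‖

/-- The Moore–Penrose pseudoinverse of a full-column-rank real matrix,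
`L† = (LᵀL)⁻¹Lᵀ`. -/
noncomputable def pinv {α β : Type*} [Fintype α] [Fintype β] [DecidableEq β]
    (L : Matrix α β ℝ) : Matrix β α ℝ :=
  (Lᵀ * L)⁻¹ * Lᵀ

/-- Full column rank: the columns are linearly independent. -/
def fullColRank {α β : Type*} (M : Matrix α β ℝ) : Prop :=
  LinearIndependent ℝ (fun j : β => fun i : α => M i j)

/-- The column space of a matrix. -/
def colSpace {α β : Type*} (M : Matrix α β ℝ) : Submodule ℝ (α → ℝ) :=
  Submodule.span ℝ (Set.range fun j : β => fun i : α => M i j)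

/-- The Krylov subspace `K_j = span{r, A r, ..., A^{j-1} r}`. -/
noncomputable def krylov {n : ℕ} (A : Matrix (Fin n) (Fin n) ℝ) (r : Fin n → ℝ) (j : ℕ) :
    Submodule ℝ (Fin n → ℝ) :=
  Submodule.span ℝ (Set.range fun i : Fin j => (A ^ (i : ℕ)).mulVec r)

/-- The hybrid (Tikhonov) residual `hr(x) = [b; 0] - [A; λI] x ∈ ℝ^{2n}`:
top block `b - A x`, bottom block `-λ x`. -/
def hres {n : ℕ} (A : Matrix (Fin n) (Fin n) ℝ) (b : Fin n → ℝ) (lam : ℝ)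
    (x : Fin n → ℝ) : (Fin n ⊕ Fin n) → ℝ :=
  Sum.elim (b - A.mulVec x) (-(lam • x))

open Matrix

section Aux

variable {α β : Type*} [Fintype α] [Fintype β]

lemma enorm_eq_norm {ι : Type*} [Fintype ι] (v : ι → ℝ) :
    euclNorm v = ‖(WithLp.equiv 2 (ι → ℝ)).symm v‖ := by
  rw [EuclideanSpace.norm_eq]
  unfold euclNorm
  congr 1
  refine Finset.sum_congr rfl fun i _ => ?_
  rw [Real.norm_eq_abs, sq_abs]
  rfl

lemma enorm_mulVec_le [DecidableEq β] (M : Matrix α β ℝ) (v : β → ℝ) :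
    euclNorm (M.mulVec v) ≤ spec M * euclNorm v := by
  have h := (LinearMap.toContinuousLinearMap (Matrix.toEuclideanLin M)).le_opNorm
    ((WithLp.equiv 2 (β → ℝ)).symm v)
  rw [enorm_eq_norm, enorm_eq_norm]
  exact h

lemma spec_nonneg [DecidableEq β] (M : Matrix α β ℝ) : 0 ≤ spec M := norm_nonneg _

omit [Fintype α] in
lemma mulVec_eq_sum_cols (M : Matrix α β ℝ) (v : β → ℝ) :
    M.mulVec v = ∑ j, v j • (fun i => M i j) := by
  funext i
  simp only [Matrix.mulVec, dotProduct, Finset.sum_apply, Pi.smul_apply,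
    smul_eq_mul]
  exact Finset.sum_congr rfl fun j _ => mul_comm _ _

lemma fullColRank_inj {M : Matrix α β ℝ} (hM : fullColRank M) {v : β → ℝ}
    (hv : M.mulVec v = 0) : v = 0 := by
  have h := Fintype.linearIndependent_iff.mp hM v
  rw [mulVec_eq_sum_cols] at hv
  exact funext (h hv)

lemma mem_colSpace_iff {M : Matrix α β ℝ} {x : α → ℝ} :
    x ∈ colSpace M ↔ ∃ c : β → ℝ, M.mulVec c = x := by
  unfold colSpace
  rw [Submodule.mem_span_range_iff_exists_fun]
  constructor
  · rintro ⟨c, hc⟩; exact ⟨c, by rw [mulVec_eq_sum_cols]; exact hc⟩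
  · rintro ⟨c, hc⟩; exact ⟨c, by rw [← mulVec_eq_sum_cols]; exact hc⟩

lemma gram_isUnit_det [DecidableEq β] {M : Matrix α β ℝ}
    (hinj : ∀ v : β → ℝ, M.mulVec v = 0 → v = 0) : IsUnit (Mᵀ * M).det := by
  by_contra h
  have hdet : (Mᵀ * M).det = 0 := by
    rcases eq_or_ne ((Mᵀ * M).det) 0 with h0 | h0
    · exact h0
    · exact absurd (isUnit_iff_ne_zero.mpr h0) h
  obtain ⟨v, hv0, hv⟩ := (Matrix.exists_mulVec_eq_zero_iff).mpr hdet
  apply hv0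
  have hvMv : (M.mulVec v) ⬝ᵥ (M.mulVec v) = 0 := by
    have : v ⬝ᵥ ((Mᵀ * M).mulVec v) = 0 := by rw [hv, dotProduct_zero]
    rwa [← Matrix.mulVec_mulVec, Matrix.dotProduct_mulVec, Matrix.vecMul_transpose] at this
  have hMv : M.mulVec v = 0 := by
    funext i
    have hsum : ∑ i, (M.mulVec v i) * (M.mulVec v i) = 0 := hvMv
    have := Finset.sum_eq_zero_iff_of_nonneg
      (fun i _ => mul_self_nonneg (M.mulVec v i)) |>.mp hsum i (Finset.mem_univ i)
    exact (mul_self_eq_zero).mp this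
  exact hinj v hMv

lemma pinv_mulVec_mulVec [DecidableEq β] {M : Matrix α β ℝ}
    (hinj : ∀ v : β → ℝ, M.mulVec v = 0 → v = 0) (c : β → ℝ) :
    (pinv M).mulVec (M.mulVec c) = c := by
  have hdet := gram_isUnit_det hinj
  rw [Matrix.mulVec_mulVec]
  unfold pinv
  rw [Matrix.mul_assoc, Matrix.nonsing_inv_mul _ hdet, Matrix.one_mulVec]

end Aux
section Kry

lemma b_mem_krylov {n k : ℕ} (A : Matrix (Fin n) (Fin n) ℝ) (b : Fin n → ℝ) :
    b ∈ krylov A b (k+1) := by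
  apply Submodule.subset_span
  exact ⟨⟨0, Nat.succ_pos k⟩, by simp⟩

lemma mulVec_mem_krylov {n k : ℕ} (A : Matrix (Fin n) (Fin n) ℝ) (b : Fin n → ℝ)
    {x : Fin n → ℝ} (hx : x ∈ krylov A b k) : A.mulVec x ∈ krylov A b (k+1) := by
  refine Submodule.span_induction ?_ ?_ ?_ ?_ hx
  · rintro _ ⟨i, rfl⟩
    apply Submodule.subset_span
    refine ⟨⟨(i : ℕ) + 1, by omega⟩, ?_⟩
    simp [Matrix.mulVec_mulVec, ← pow_succ']
  · simp
  · intro y z _ _ hy hz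
    rw [Matrix.mulVec_add]; exact Submodule.add_mem _ hy hz
  · intro c y _ hy
    rw [Matrix.mulVec_smul]; exact Submodule.smul_mem _ c hy

lemma blockdiag_inj {n m p q : ℕ} {P : Matrix (Fin n) (Fin p) ℝ} {Q : Matrix (Fin m) (Fin q) ℝ}
    (hP : ∀ v : Fin p → ℝ, P.mulVec v = 0 → v = 0)
    (hQ : ∀ v : Fin q → ℝ, Q.mulVec v = 0 → v = 0) :
    ∀ v : Fin p ⊕ Fin q → ℝ, (Matrix.fromBlocks P 0 0 Q).mulVec v = 0 → v = 0 := by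
  intro v hv
  rw [Matrix.fromBlocks_mulVec] at hv
  have h1 : P.mulVec (v ∘ Sum.inl) = 0 := by
    funext i
    have := congrFun hv (Sum.inl i)
    simpa using this
  have h2 : Q.mulVec (v ∘ Sum.inr) = 0 := by
    funext i
    have := congrFun hv (Sum.inr i)
    simpa using this
  have e1 := hP _ h1
  have e2 := hQ _ h2
  funext j
  cases j with
  | inl j => exact congrFun e1 j
  | inr j => exact congrFun e2 j

end Kry
/-- the H-CMRH–hybrid GMRES residual bound
`‖hr_k^G‖ ≤ ‖hr_k^C‖ ≤ κ(L̄_{k+1}) ‖hr_k^G‖`, where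
`L̄_{k+1} = diag(L_{k+1}, L_k)`, `x_k^G` is the hybrid GMRES iterate and
`x_k^C` the hybrid CMRH iterate. -/
theorem hcmrh_hgmres_residual_bound (n k : ℕ) (A : Matrix (Fin n) (Fin n) ℝ)
    (b : Fin n → ℝ) (hb : b ≠ 0) (lam : ℝ)
    (L1 : Matrix (Fin n) (Fin (k+1)) ℝ)
    (hL1 : fullColRank L1)
    (hcol1 : colSpace L1 = krylov A b (k+1))
    (hLk : fullColRank (L1.submatrix id Fin.castSucc))
    (hcolk : colSpace (L1.submatrix id Fin.castSucc) = krylov A b k)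
    (xG xC : Fin n → ℝ)
    (hxG : xG ∈ krylov A b k)
    (hxC : xC ∈ krylov A b k)
    (hGopt : ∀ x : Fin n → ℝ, x ∈ krylov A b k →
      euclNorm (hres A b lam xG) ≤ euclNorm (hres A b lam x))
    (hCopt : ∀ x : Fin n → ℝ, x ∈ krylov A b k →
      euclNorm ((pinv (Matrix.fromBlocks L1 0 0
          (L1.submatrix id Fin.castSucc))).mulVec (hres A b lam xC)) ≤
      euclNorm ((pinv (Matrix.fromBlocks L1 0 0
          (L1.submatrix id Fin.castSucc))).mulVec (hres A b lam x))) :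
    euclNorm (hres A b lam xG) ≤ euclNorm (hres A b lam xC) ∧
    euclNorm (hres A b lam xC) ≤
      spec (Matrix.fromBlocks L1 0 0 (L1.submatrix id Fin.castSucc)) *
      spec (pinv (Matrix.fromBlocks L1 0 0 (L1.submatrix id Fin.castSucc))) *
      euclNorm (hres A b lam xG) := by
  set Lk := L1.submatrix id Fin.castSucc with hLkdef
  set Lb := Matrix.fromBlocks L1 0 0 Lk with hLbdef
  have hinj1 : ∀ v, L1.mulVec v = 0 → v = 0 := fun v hv => fullColRank_inj hL1 hv
  have hinjk : ∀ v, Lk.mulVec v = 0 → v = 0 := fun v hv => fullColRank_inj hLk hv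
  have hinjb := blockdiag_inj hinj1 hinjk
  have hu : b - A.mulVec xC ∈ colSpace L1 := by
    rw [hcol1]
    exact Submodule.sub_mem _ (b_mem_krylov A b) (mulVec_mem_krylov A b hxC)
  have hw : -(lam • xC) ∈ colSpace Lk := by
    rw [hcolk]
    exact Submodule.neg_mem _ (Submodule.smul_mem _ _ hxC)
  obtain ⟨c1, hc1⟩ := mem_colSpace_iff.mp hu
  obtain ⟨c2, hc2⟩ := mem_colSpace_iff.mp hw
  have hrep : hres A b lam xC = Lb.mulVec (Sum.elim c1 c2) := by
    rw [hLbdef, Matrix.fromBlocks_mulVec]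
    unfold hres
    simp [hc1, hc2]
  have hre : Lb.mulVec ((pinv Lb).mulVec (hres A b lam xC)) = hres A b lam xC := by
    conv_lhs => rw [hrep, pinv_mulVec_mulVec hinjb]
    exact hrep.symm
  refine ⟨hGopt xC hxC, ?_⟩
  calc euclNorm (hres A b lam xC)
      = euclNorm (Lb.mulVec ((pinv Lb).mulVec (hres A b lam xC))) := by rw [hre]
    _ ≤ spec Lb * euclNorm ((pinv Lb).mulVec (hres A b lam xC)) := enorm_mulVec_le _ _
    _ ≤ spec Lb * euclNorm ((pinv Lb).mulVec (hres A b lam xG)) :=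
        mul_le_mul_of_nonneg_left (hCopt xG hxG) (spec_nonneg _)
    _ ≤ spec Lb * (spec (pinv Lb) * euclNorm (hres A b lam xG)) :=
        mul_le_mul_of_nonneg_left (enorm_mulVec_le _ _) (spec_nonneg _)
    _ = spec Lb * spec (pinv Lb) * euclNorm (hres A b lam xG) := (mul_assoc _ _ _).symm
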